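/- arXiv:1902.05640 — 3 statements merged into one kernel-verified Lean document; each statement's English description precedes it below -/
import Mathlib

section
/- Let K ≥ 2 and let γ ∈ ℝ^K be a normalized rate vector (γ_k ≥ 0 for all k and Σ_k γ_k = 1). Then the ℓ1-based fairness measure F(γ) = 1 − (K/(2(K−1)))·‖γ − e‖₁ satisfies 0 ≤ F(γ) ≤ 1. -/
open Finset

/-- The right-hand side is linear in `x`, so the bound can be summed against a probability
vector. -/
lemma abs_sub_le_of_mem_Icc {x c : ℝ} (hx : x ∈ Set.Icc 0 1) (hc : c ∈ Set.Icc 0 1) :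
    |x - c| ≤ 2 * (1 - c) * x - (x - c) := by
  obtain ⟨hx₀, hx₁⟩ := hx
  obtain ⟨hc₀, hc₁⟩ := hc
  rcases le_total c x with hcx | hxc
  · rw [abs_of_nonneg (sub_nonneg.2 hcx)]
    nlinarith
  · rw [abs_of_nonpos (sub_nonpos.2 hxc)]
    nlinarith

lemma sum_abs_sub_inv_card_le {ι : Type*} [Fintype ι] (p : ι → ℝ) (hp : ∀ i, 0 ≤ p i)
    (hsum : ∑ i, p i = 1) :
    ∑ i, |p i - (Fintype.card ι : ℝ)⁻¹| ≤ 2 * (1 - (Fintype.card ι : ℝ)⁻¹) := by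
  have hcard : (Fintype.card ι : ℝ) ≠ 0 := by
    rintro h
    rw [Nat.cast_eq_zero, Fintype.card_eq_zero_iff] at h
    simp at hsum
  have hp₁ : ∀ i, p i ≤ 1 := fun i =>
    hsum ▸ single_le_sum (fun j _ => hp j) (mem_univ i)
  calc ∑ i, |p i - (Fintype.card ι : ℝ)⁻¹|
      ≤ ∑ i, (2 * (1 - (Fintype.card ι : ℝ)⁻¹) * p i - (p i - (Fintype.card ι : ℝ)⁻¹)) :=
        sum_le_sum fun i _ => abs_sub_le_of_mem_Icc ⟨hp i, hp₁ i⟩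
          ⟨by positivity, Nat.cast_inv_le_one _⟩
    _ = 2 * (1 - (Fintype.card ι : ℝ)⁻¹) := by
        simp [sum_sub_distrib, ← mul_sum, hsum, hcard]

/-- For a normalized rate vector `γ` with `K ≥ 2`, the ℓ1-based fairness
measure `F(γ) = 1 − (K/(2(K−1)))‖γ − e‖₁` satisfies `0 ≤ F(γ) ≤ 1`. -/
theorem l1_fairness_range (K : ℕ) (hK : 2 ≤ K) (γ : Fin K → ℝ)
    (hnonneg : ∀ k, 0 ≤ γ k) (hsum : ∑ k, γ k = 1) :
    0 ≤ 1 - (K : ℝ) / (2 * ((K : ℝ) - 1)) * ∑ k, |γ k - (1 : ℝ) / K| ∧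
      1 - (K : ℝ) / (2 * ((K : ℝ) - 1)) * ∑ k, |γ k - (1 : ℝ) / K| ≤ 1 := by
  have hK₁ : (1 : ℝ) < K := by exact_mod_cast hK
  have hD : ∑ k, |γ k - (1 : ℝ) / K| ≤ 2 * (1 - 1 / K) := by
    simpa [one_div] using sum_abs_sub_inv_card_le γ hnonneg hsum
  have hD₀ : 0 ≤ ∑ k, |γ k - (1 : ℝ) / K| := sum_nonneg fun k _ => abs_nonneg _
  have hcoef : 0 ≤ (K : ℝ) / (2 * ((K : ℝ) - 1)) := div_nonneg (by positivity) (by linarith)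
  have hnormalize : (K : ℝ) / (2 * ((K : ℝ) - 1)) * (2 * (1 - 1 / K)) = 1 := by
    have : (K : ℝ) - 1 ≠ 0 := by linarith
    field_simp
  constructor
  · linarith [mul_le_mul_of_nonneg_left hD hcoef]
  · linarith [mul_nonneg hcoef hD₀]
end

section
/- (Theorem) Let K ≥ 2 and let γ ∈ ℝ^K be a normalized rate vector (γ_k ≥ 0 for all k and Σ_k γ_k = 1), with e = (1/K, …, 1/K). Set t = √(K‖γ‖₂² − 1) (which equals |tan θ| for the angle θ between γ and e). Then the deviation of the ℓ1-based fairness measure from 1 satisfies the two-sided bound (√K/(2(K−1)))·t ≤ 1 − F(γ) ≤ (K/(2(K−1)))·t, so that F(γ) = 1 − Θ(tan θ) as θ → 0. -/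
/-! Write `d = γ - e`. Since `∑ γ = 1`, expanding the square gives `K‖γ‖₂² - 1 = K‖d‖₂²`, so
`t = √K ‖d‖₂`, while `1 - F(γ) = (K/(2(K-1)))‖d‖₁`. The two bounds are then the comparison
`‖d‖₂ ≤ ‖d‖₁ ≤ √K ‖d‖₂` of the ℓ1 and ℓ2 norms on `ℝ^K`, the right half being Cauchy–Schwarz. -/

open Finset Real

section

variable {ι : Type*} [Fintype ι]

theorem sqrt_sum_sq_le_sum_abs (d : ι → ℝ) : √(∑ i, d i ^ 2) ≤ ∑ i, |d i| := by
  refine sqrt_le_iff.mpr ⟨sum_nonneg fun i _ => abs_nonneg _, ?_⟩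
  calc ∑ i, d i ^ 2 = ∑ i, |d i| ^ 2 := by simp only [sq_abs]
    _ ≤ (∑ i, |d i|) ^ 2 := sum_sq_le_sq_sum_of_nonneg fun i _ => abs_nonneg _

theorem sum_abs_le_sqrt_card_mul_sqrt_sum_sq (d : ι → ℝ) :
    ∑ i, |d i| ≤ √(Fintype.card ι) * √(∑ i, d i ^ 2) := by
  rw [← sqrt_mul (Nat.cast_nonneg _)]
  refine le_sqrt_of_sq_le ?_
  simpa only [sq_abs, card_univ] using sq_sum_le_card_mul_sum_sq (s := univ) (f := fun i => |d i|)

theorem card_mul_sum_sq_sub_one_eq {γ : ι → ℝ} (hsum : ∑ i, γ i = 1) :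
    (Fintype.card ι : ℝ) * ∑ i, γ i ^ 2 - 1 =
      Fintype.card ι * ∑ i, (γ i - 1 / Fintype.card ι) ^ 2 := by
  have hcard : (Fintype.card ι : ℝ) ≠ 0 := by
    rintro h
    rw [Nat.cast_eq_zero, Fintype.card_eq_zero_iff] at h
    simp at hsum
  simp only [sub_sq, sum_add_distrib, sum_sub_distrib, ← sum_mul, ← mul_sum, hsum, sum_const,
    card_univ, nsmul_eq_mul]
  field_simp
  ring

end

theorem l1_fairness_theta_tan_general (K : ℕ) (hK : 2 ≤ K) (γ : Fin K → ℝ)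
    (hsum : ∑ k, γ k = 1)
    (t : ℝ) (ht : t = Real.sqrt ((K : ℝ) * (∑ k, (γ k) ^ 2) - 1)) :
    Real.sqrt K / (2 * ((K : ℝ) - 1)) * t ≤
        1 - (1 - (K : ℝ) / (2 * ((K : ℝ) - 1)) * ∑ k, |γ k - (1 : ℝ) / K|) ∧
      1 - (1 - (K : ℝ) / (2 * ((K : ℝ) - 1)) * ∑ k, |γ k - (1 : ℝ) / K|) ≤
        (K : ℝ) / (2 * ((K : ℝ) - 1)) * t := by
  set d : Fin K → ℝ := fun k => γ k - 1 / K
  have hc : 0 ≤ (K : ℝ) / (2 * ((K : ℝ) - 1)) := by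
    have : (2 : ℝ) ≤ K := by exact_mod_cast hK
    exact div_nonneg (by positivity) (by linarith)
  have ht' : t = √K * √(∑ k, d k ^ 2) := by
    have := card_mul_sum_sq_sub_one_eq hsum
    rw [Fintype.card_fin] at this
    rw [ht, this, sqrt_mul (Nat.cast_nonneg _)]
  have hl1_le_l2 := sum_abs_le_sqrt_card_mul_sqrt_sum_sq d
  rw [Fintype.card_fin] at hl1_le_l2
  rw [ht']
  constructor
  · calc √K / (2 * ((K : ℝ) - 1)) * (√K * √(∑ k, d k ^ 2))
        = (K : ℝ) / (2 * ((K : ℝ) - 1)) * √(∑ k, d k ^ 2) := by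
          rw [← mul_assoc, div_mul_eq_mul_div, mul_self_sqrt (Nat.cast_nonneg _)]
      _ ≤ (K : ℝ) / (2 * ((K : ℝ) - 1)) * ∑ k, |d k| :=
          mul_le_mul_of_nonneg_left (sqrt_sum_sq_le_sum_abs d) hc
      _ = _ := by ring
  · calc 1 - (1 - (K : ℝ) / (2 * ((K : ℝ) - 1)) * ∑ k, |d k|)
        = (K : ℝ) / (2 * ((K : ℝ) - 1)) * ∑ k, |d k| := by ring
      _ ≤ _ := mul_le_mul_of_nonneg_left hl1_le_l2 hc

/-- Theorem: For a normalized rate vector `γ` with `K ≥ 2`, set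
`t = √(K‖γ‖₂² − 1)` (which equals `|tan θ|` for the angle `θ` between `γ` and
`e = (1/K,…,1/K)`).  Then the deviation of the ℓ1-based fairness measure
`F(γ) = 1 − (K/(2(K−1)))‖γ − e‖₁` from 1 satisfies the two-sided bound
`(√K/(2(K−1)))·t ≤ 1 − F(γ) ≤ (K/(2(K−1)))·t`, so `F(γ) = 1 − Θ(tan θ)` as `θ → 0`. -/
theorem l1_fairness_theta_tan (K : ℕ) (hK : 2 ≤ K) (γ : Fin K → ℝ)
    (hnonneg : ∀ k, 0 ≤ γ k) (hsum : ∑ k, γ k = 1)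
    (t : ℝ) (ht : t = Real.sqrt ((K : ℝ) * (∑ k, (γ k) ^ 2) - 1)) :
    Real.sqrt K / (2 * ((K : ℝ) - 1)) * t ≤
        1 - (1 - (K : ℝ) / (2 * ((K : ℝ) - 1)) * ∑ k, |γ k - (1 : ℝ) / K|) ∧
      1 - (1 - (K : ℝ) / (2 * ((K : ℝ) - 1)) * ∑ k, |γ k - (1 : ℝ) / K|) ≤
        (K : ℝ) / (2 * ((K : ℝ) - 1)) * t :=
  l1_fairness_theta_tan_general K hK γ hsum t ht
end

section
/- (Nash standard for proportional fairness, eqs. (17)-(18)) Let S ⊆ ℝ^K be a convex set and for each k let R_k : S → ℝ be a concave function that is strictly positive on S. Suppose p* ∈ S maximizes Σ_{k=1}^K log(R_k(p)) over S. Then for every p ∈ S, the aggregate proportional change is nonpositive: Σ_{k=1}^K (R_k(p) − R_k(p*)) / R_k(p*) ≤ 0. -/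
/-!
Compare the log-sum objective along the segment from `p*` to `p` with the log-sum of the chords
`t ↦ (1 - t) R_k(p*) + t R_k(p)`. By concavity each chord lies below `R_k` on the segment, so the
chord objective `g` is at most `∑ log R_k(p*) = g 0` on `[0, 1]`. Hence `g' 0 ≤ 0`, and
`g' 0 = ∑ (R_k(p) - R_k(p*)) / R_k(p*)`.
-/

open Real Set

theorem IsMaxOn.hasDerivAt_nonpos_of_left_endpoint {g : ℝ → ℝ} {g' a b : ℝ} (hab : a < b)
    (hmax : IsMaxOn g (Icc a b) a) (hg : HasDerivAt g g' a) : g' ≤ 0 := by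
  have hcone : (1 : ℝ) ∈ posTangentConeAt (Icc a b) a :=
    one_mem_posTangentConeAt_iff_frequently.2 (Filter.Eventually.frequently (Icc_mem_nhdsGT hab))
  simpa using hmax.localize.hasFDerivWithinAt_nonpos hg.hasFDerivAt.hasFDerivWithinAt hcone

theorem ConcaveOn.log_combo_le {E : Type*} [AddCommGroup E] [Module ℝ E] {S : Set E}
    {f : E → ℝ} (hf : ConcaveOn ℝ S f) (hpos : ∀ p ∈ S, 0 < f p) {x y : E} (hx : x ∈ S)
    (hy : y ∈ S) {t : ℝ} (ht : t ∈ Icc 0 1) :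
    log ((1 - t) * f x + t * f y) ≤ log (f ((1 - t) • x + t • y)) := by
  obtain ⟨ht0, ht1⟩ := ht
  have hchord_pos : 0 < (1 - t) * f x + t * f y := by
    simpa using (convex_Ioi (0 : ℝ)) (hpos x hx) (hpos y hy) (sub_nonneg.2 ht1) ht0 (by ring)
  exact log_le_log hchord_pos (by simpa using hf.2 hx hy (sub_nonneg.2 ht1) ht0 (by ring))

theorem hasDerivAt_log_combo {x y : ℝ} (hx : x ≠ 0) :
    HasDerivAt (fun t ↦ log ((1 - t) * x + t * y)) ((y - x) / x) 0 := by
  have hline : (fun t : ℝ ↦ (1 - t) * x + t * y) = fun t ↦ x + t * (y - x) := by ext; ring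
  have hline_deriv : HasDerivAt (fun t : ℝ ↦ (1 - t) * x + t * y) (y - x) 0 := by
    rw [hline]
    simpa using ((hasDerivAt_id (0 : ℝ)).mul_const (y - x)).const_add x
  simpa using hline_deriv.log (by simpa using hx)

theorem nash_standard_proportional_fairness_general (K : ℕ)
    (S : Set (Fin K → ℝ)) (hS : Convex ℝ S)
    (R : Fin K → (Fin K → ℝ) → ℝ)
    (hconc : ∀ k, ConcaveOn ℝ S (R k))
    (hpos : ∀ k, ∀ p ∈ S, 0 < R k p)
    (pstar : Fin K → ℝ) (hpstar : pstar ∈ S)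
    (hmax : ∀ p ∈ S, ∑ k, Real.log (R k p) ≤ ∑ k, Real.log (R k pstar)) :
    ∀ p ∈ S, ∑ k, (R k p - R k pstar) / R k pstar ≤ 0 := by
  intro p hp
  set g : ℝ → ℝ := fun t ↦ ∑ k, log ((1 - t) * R k pstar + t * R k p)
  have hderiv : HasDerivAt g (∑ k, (R k p - R k pstar) / R k pstar) 0 :=
    HasDerivAt.fun_sum fun k _ ↦ hasDerivAt_log_combo (hpos k pstar hpstar).ne'
  have hg_max : IsMaxOn g (Icc 0 1) 0 := fun t ht ↦ by
    calc g t ≤ ∑ k, log (R k ((1 - t) • pstar + t • p)) :=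
          Finset.sum_le_sum fun k _ ↦ (hconc k).log_combo_le (hpos k) hpstar hp ht
      _ ≤ ∑ k, log (R k pstar) := hmax _ (hS hpstar hp (sub_nonneg.2 ht.2) ht.1 (by ring))
      _ = g 0 := by simp [g]
  exact hg_max.hasDerivAt_nonpos_of_left_endpoint zero_lt_one hderiv

/-- Nash standard for proportional fairness, eqs. (17)-(18): Let
`S ⊆ ℝ^K` be convex and let each rate function `R k : S → ℝ` be concave and strictly
positive on `S`.  If `p*` maximizes `∑ k, log(R k p)` over `S`, then for every `p ∈ S`
the aggregate proportional change is nonpositive: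
`∑ k, (R k p − R k p*) / (R k p*) ≤ 0`. -/
theorem nash_standard_proportional_fairness (K : ℕ) (hK : 1 ≤ K)
    (S : Set (Fin K → ℝ)) (hS : Convex ℝ S)
    (R : Fin K → (Fin K → ℝ) → ℝ)
    (hconc : ∀ k, ConcaveOn ℝ S (R k))
    (hpos : ∀ k, ∀ p ∈ S, 0 < R k p)
    (pstar : Fin K → ℝ) (hpstar : pstar ∈ S)
    (hmax : ∀ p ∈ S, ∑ k, Real.log (R k p) ≤ ∑ k, Real.log (R k pstar)) :
    ∀ p ∈ S, ∑ k, (R k p - R k pstar) / R k pstar ≤ 0 :=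
  nash_standard_proportional_fairness_general K S hS R hconc hpos pstar hpstar hmax
end
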